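/- For z > 0 and x > 1, K_2(z, x) < (x + 2/z) · x²/(z(x² − 1)) · exp(−(z/2)(x + 1/x)). -/

import Mathlib

noncomputable def besselK (ν z x : ℝ) : ℝ :=
  (1 / 2) * ∫ t in Set.Ioi x, t ^ (ν - 1) * Real.exp (-(z / 2) * (t + 1 / t))

/-!
Write `φ(t) = exp (-(z/2)(t + 1/t))`, so that `K_2(z, x) = ∫_x^∞ (t/2) φ(t) dt`, and let
`M(t) = (t + 2/z) t² / (z(t² - 1)) φ(t)` be the claimed bound. A direct computation gives
`-M'(t) = (t/2 + (t² + 4t/z + 1) / (z(t² - 1)²)) φ(t)`, which exceeds the integrand `(t/2) φ(t)`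
for `t > 1`; since `M(t) → 0` as `t → ∞`, integrating over `(x, ∞)` gives `K_2(z, x) < M(x)`.
-/

open MeasureTheory Filter Set Real Topology

noncomputable def besselKTwoMajorant (z t : ℝ) : ℝ :=
  (t + 2 / z) * t ^ 2 / (z * (t ^ 2 - 1)) * exp (-(z / 2) * (t + 1 / t))

theorem setIntegral_Ioi_lt_of_lt_neg_deriv {f f' g : ℝ → ℝ} {a : ℝ}
    (hcont : ContinuousWithinAt f (Ici a) a) (hderiv : ∀ t ∈ Ioi a, HasDerivAt f (f' t) t)
    (hf : Tendsto f atTop (𝓝 0)) (hg_meas : AEStronglyMeasurable g (volume.restrict (Ioi a)))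
    (hg_nonneg : ∀ t ∈ Ioi a, 0 ≤ g t) (hg_lt : ∀ t ∈ Ioi a, g t < -f' t) :
    ∫ t in Ioi a, g t < f a := by
  have hf'_nonpos : ∀ t ∈ Ioi a, f' t ≤ 0 := fun t ht => by
    linarith [hg_nonneg t ht, hg_lt t ht]
  have hf'_int : IntegrableOn f' (Ioi a) :=
    integrableOn_Ioi_deriv_of_nonpos hcont hderiv hf'_nonpos hf
  have hf'_integral : ∫ t in Ioi a, f' t = -f a := by
    simpa using integral_Ioi_of_hasDerivAt_of_nonpos hcont hderiv hf'_nonpos hf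
  have hg_int : IntegrableOn g (Ioi a) :=
    hf'_int.neg.mono' hg_meas <| ae_restrict_of_forall_mem measurableSet_Ioi fun t ht => by
      rw [Real.norm_of_nonneg (hg_nonneg t ht)]
      exact (hg_lt t ht).le
  have hgap : 0 < ∫ t in Ioi a, (-f' t - g t) := by
    have hpos : ∀ t ∈ Ioi a, 0 < -f' t - g t := fun t ht => sub_pos.2 (hg_lt t ht)
    rw [setIntegral_pos_iff_support_of_nonneg_ae
      (ae_restrict_of_forall_mem measurableSet_Ioi fun t ht => (hpos t ht).le)
      (hf'_int.neg.sub hg_int)]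
    refine measure_pos_of_superset (fun t ht => ⟨(hpos t ht).ne', ht⟩) ?_
    simp
  rw [integral_sub (f := fun t => -f' t) hf'_int.neg hg_int, integral_neg, hf'_integral] at hgap
  linarith

theorem hasDerivAt_besselKTwoMajorant {z t : ℝ} (hz : z ≠ 0) (ht0 : t ≠ 0) (ht1 : t ^ 2 ≠ 1) :
    HasDerivAt (besselKTwoMajorant z)
      (-((t / 2 + (t ^ 2 + 4 / z * t + 1) / (z * (t ^ 2 - 1) ^ 2)) *
        exp (-(z / 2) * (t + 1 / t)))) t := by
  have hden : z * (t ^ 2 - 1) ≠ 0 := mul_ne_zero hz (sub_ne_zero.2 ht1)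
  have hrat := (((hasDerivAt_id' (x := t)).add_const (2 / z)).fun_mul
    (hasDerivAt_pow 2 t)).fun_div (((hasDerivAt_pow 2 t).sub_const 1).const_mul z) hden
  have hexp := (((hasDerivAt_id' (x := t)).fun_add
    ((hasDerivAt_id' (x := t)).fun_inv ht0)).const_mul (-(z / 2))).exp
  unfold besselKTwoMajorant
  simp only [one_div]
  refine (hrat.fun_mul hexp).congr_deriv ?_
  field_simp
  ring

theorem tendsto_sq_div_sq_sub_one_atTop :
    Tendsto (fun t : ℝ => t ^ 2 / (t ^ 2 - 1)) atTop (𝓝 1) := by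
  have h : Tendsto (fun t : ℝ => (1 - t⁻¹ ^ 2)⁻¹) atTop (𝓝 1) := by
    simpa using (((tendsto_inv_atTop_zero (𝕜 := ℝ)).pow 2).const_sub 1).inv₀ (by norm_num)
  refine h.congr' ?_
  filter_upwards [eventually_ne_atTop 0] with t ht
  field_simp

theorem tendsto_add_const_mul_exp_neg_mul_atTop (c : ℝ) {b : ℝ} (hb : 0 < b) :
    Tendsto (fun t => (t + c) * exp (-b * t)) atTop (𝓝 0) := by
  have h := (tendsto_rpow_mul_exp_neg_mul_atTop_nhds_zero 1 b hb).add
    ((tendsto_exp_atBot.comp (tendsto_id.const_mul_atTop_of_neg (neg_neg_of_pos hb))).const_mul c)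
  simp only [rpow_one, mul_zero, add_zero] at h
  refine h.congr fun t => ?_
  simp only [Function.comp_apply, id]
  ring

theorem tendsto_besselKTwoMajorant_atTop {z : ℝ} (hz : 0 < z) :
    Tendsto (besselKTwoMajorant z) atTop (𝓝 0) := by
  have h_exp_inv : Tendsto (fun t : ℝ => exp (-(z / 2) * t⁻¹)) atTop (𝓝 1) := by
    simpa only [mul_zero, exp_zero, Function.comp_def] using
      (continuous_exp.tendsto _).comp (tendsto_inv_atTop_zero.const_mul (-(z / 2)))
  have h := ((tendsto_sq_div_sq_sub_one_atTop.mul h_exp_inv).mul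
    (tendsto_add_const_mul_exp_neg_mul_atTop (2 / z) (half_pos hz))).div_const z
  rw [mul_zero, zero_div] at h
  refine h.congr fun t => ?_
  rw [besselKTwoMajorant, one_div, mul_add, exp_add, mul_div_assoc, div_mul_eq_div_div]
  ring

theorem besselK_two_eq_integral (z x : ℝ) :
    besselK 2 z x = ∫ t in Ioi x, t / 2 * exp (-(z / 2) * (t + 1 / t)) := by
  rw [besselK, ← integral_const_mul]
  norm_num [div_eq_inv_mul, mul_assoc]

theorem besselK_two_lt (z x : ℝ) (hz : 0 < z) (hx : 1 < x) :
    besselK 2 z x < (x + 2 / z) * x ^ 2 / (z * (x ^ 2 - 1)) *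
      Real.exp (-(z / 2) * (x + 1 / x)) := by
  have hderiv (t : ℝ) (ht : 1 < t) :=
    hasDerivAt_besselKTwoMajorant (t := t) hz.ne' (by positivity) (by nlinarith)
  rw [besselK_two_eq_integral]
  refine setIntegral_Ioi_lt_of_lt_neg_deriv (hderiv x hx).continuousAt.continuousWithinAt
    (fun t ht => hderiv t (hx.trans ht)) (tendsto_besselKTwoMajorant_atTop hz)
    (by fun_prop : Measurable _).aestronglyMeasurable
    (fun t ht => by have := hx.trans ht; positivity) fun t ht => ?_
  have ht1 : 1 < t := hx.trans ht
  have hgap : 0 < (t ^ 2 + 4 / z * t + 1) / (z * (t ^ 2 - 1) ^ 2) := by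
    have : 0 < t ^ 2 - 1 := by nlinarith
    positivity
  rw [neg_neg]
  gcongr
  linarith
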